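/- arXiv:math/0503625 — 2 statements merged into one kernel-verified Lean document; each statement's English description precedes it below -/
import Mathlib

section
/- Conversely, if A is a commutative associative unital k-algebra that is also a coalgebra with comultiplication Δ : A → A ⊗ A and counit ε : A → k, such that Δ is a map of A-bimodules, then A is a Frobenius algebra: the pairing (a,b) ↦ ε(ab) is nondegenerate and A is finite-dimensional. -/
open TensorProduct

/-!
Writing `Δ 1 = ∑ xᵢ ⊗ yᵢ`, left `A`-linearity of `Δ` gives `Δ a = ∑ a xᵢ ⊗ yᵢ`, and the counit
law turns this into `a = ∑ ε (a xᵢ) • yᵢ`. Hence `a` vanishes once `ε (a ·)` does, and the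
finitely many `yᵢ` span `A`.
-/

theorem TensorProduct.exists_finset_forall_lid_rTensor_mem_span {R M N : Type*}
    [CommSemiring R] [AddCommMonoid M] [AddCommMonoid N] [Module R M] [Module R N]
    (t : M ⊗[R] N) :
    ∃ s : Finset N, ∀ f : M →ₗ[R] R, TensorProduct.lid R N (f.rTensor N t) ∈ Submodule.span R s := by
  classical
  obtain ⟨S, rfl⟩ := TensorProduct.exists_finset t
  refine ⟨S.image Prod.snd, fun f => ?_⟩
  simp only [map_sum, LinearMap.rTensor_tmul, TensorProduct.lid_tmul]
  exact Submodule.sum_mem _ fun p hp =>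
    Submodule.smul_mem _ _ (Submodule.subset_span (Finset.mem_image_of_mem Prod.snd hp))

section CounitalLeftLinear

variable {k A : Type*} [CommSemiring k] [Semiring A] [Algebra k A]
  {Δ : A →ₗ[k] A ⊗[k] A} {ε : A →ₗ[k] k}

theorem lid_rTensor_counit_mulLeft_comul_one
    (hcounit_l : ∀ a : A, TensorProduct.lid k A (TensorProduct.map ε LinearMap.id (Δ a)) = a)
    (hbimod_l : ∀ a b : A,
      Δ (a * b) = TensorProduct.map (LinearMap.mulLeft k a) LinearMap.id (Δ b))
    (a : A) :
    TensorProduct.lid k A ((ε ∘ₗ LinearMap.mulLeft k a).rTensor A (Δ 1)) = a := by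
  rw [LinearMap.rTensor_comp, LinearMap.comp_apply]
  change TensorProduct.lid k A (TensorProduct.map ε LinearMap.id
    (TensorProduct.map (LinearMap.mulLeft k a) LinearMap.id (Δ 1))) = a
  rw [← hbimod_l, mul_one, hcounit_l]

theorem eq_zero_of_forall_counit_mul_eq_zero
    (hcounit_l : ∀ a : A, TensorProduct.lid k A (TensorProduct.map ε LinearMap.id (Δ a)) = a)
    (hbimod_l : ∀ a b : A,
      Δ (a * b) = TensorProduct.map (LinearMap.mulLeft k a) LinearMap.id (Δ b))
    {a : A} (ha : ∀ b : A, ε (a * b) = 0) : a = 0 := by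
  have hzero : ε ∘ₗ LinearMap.mulLeft k a = 0 := LinearMap.ext ha
  rw [← lid_rTensor_counit_mulLeft_comul_one hcounit_l hbimod_l a, hzero,
    LinearMap.rTensor_zero, LinearMap.zero_apply, map_zero]

theorem Module.finite_of_counit_of_comul_mul_left
    (hcounit_l : ∀ a : A, TensorProduct.lid k A (TensorProduct.map ε LinearMap.id (Δ a)) = a)
    (hbimod_l : ∀ a b : A,
      Δ (a * b) = TensorProduct.map (LinearMap.mulLeft k a) LinearMap.id (Δ b)) :
    Module.Finite k A := by
  obtain ⟨s, hs⟩ := TensorProduct.exists_finset_forall_lid_rTensor_mem_span (Δ 1)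
  refine ⟨⟨s, eq_top_iff.mpr fun a _ => ?_⟩⟩
  simpa only [lid_rTensor_counit_mulLeft_comul_one hcounit_l hbimod_l a]
    using hs (ε ∘ₗ LinearMap.mulLeft k a)

end CounitalLeftLinear

theorem coalgebra_bimodule_implies_frobenius_general
    (k A : Type*) [Field k] [CommRing A] [Algebra k A]
    (Δ : A →ₗ[k] (A ⊗[k] A)) (ε : A →ₗ[k] k)
    -- counit laws:
    (hcounit_l : ∀ a : A, (TensorProduct.lid k A) ((TensorProduct.map ε LinearMap.id) (Δ a)) = a)
    -- Δ is a map of A-bimodules: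
    (hbimod_l : ∀ a b : A,
      Δ (a * b) = (TensorProduct.map (LinearMap.mulLeft k a) LinearMap.id) (Δ b)) :
    (∀ a : A, (∀ b : A, ε (a * b) = 0) → a = 0) ∧ FiniteDimensional k A :=
  ⟨fun _ => eq_zero_of_forall_counit_mul_eq_zero hcounit_l hbimod_l,
    Module.finite_of_counit_of_comul_mul_left hcounit_l hbimod_l⟩

/-- If `A` is a commutative associative unital `k`-algebra which is also a
coassociative counital coalgebra, with comultiplication `Δ : A → A ⊗ A` and counit
`ε : A → k`, such that `Δ` is a map of `A`-bimodules
(`Δ(a·b) = (a ⊗ 1)·Δ(b) = Δ(a)·(1 ⊗ b)` for the outer bimodule structure on `A ⊗ A`),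
then `A` is a Frobenius algebra: the pairing `(a,b) ↦ ε (a·b)` is nondegenerate and `A`
is finite-dimensional. -/
theorem coalgebra_bimodule_implies_frobenius
    (k A : Type*) [Field k] [CommRing A] [Algebra k A]
    (Δ : A →ₗ[k] (A ⊗[k] A)) (ε : A →ₗ[k] k)
    -- coassociativity:
    (hcoassoc : ∀ a : A,
      (TensorProduct.assoc k A A A) ((TensorProduct.map Δ LinearMap.id) (Δ a))
        = (TensorProduct.map LinearMap.id Δ) (Δ a))
    -- counit laws:
    (hcounit_l : ∀ a : A, (TensorProduct.lid k A) ((TensorProduct.map ε LinearMap.id) (Δ a)) = a)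
    (hcounit_r : ∀ a : A, (TensorProduct.rid k A) ((TensorProduct.map LinearMap.id ε) (Δ a)) = a)
    -- Δ is a map of A-bimodules:
    (hbimod_l : ∀ a b : A,
      Δ (a * b) = (TensorProduct.map (LinearMap.mulLeft k a) LinearMap.id) (Δ b))
    (hbimod_r : ∀ a b : A,
      Δ (a * b) = (TensorProduct.map LinearMap.id (LinearMap.mulRight k b)) (Δ a)) :
    (∀ a : A, (∀ b : A, ε (a * b) = 0) → a = 0) ∧ FiniteDimensional k A :=
  coalgebra_bimodule_implies_frobenius_general k A Δ ε hcounit_l hbimod_l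
end

section
/- In a graded commutative algebra V over a field of characteristic ≠ 2 equipped with a degree-one operator Δ with Δ² = 0, define {a,b} = (-1)^{|a|} Δ(ab) − (-1)^{|a|} Δ(a)·b − a·Δ(b). If the bracket {·,·} is a graded derivation of the product in each variable (i.e., V is a BV-algebra), then {·,·} satisfies the graded Jacobi identity making V[1] a graded Lie algebra; in particular the bracket is graded antisymmetric: {a,b} = −(−1)^{(|a|+1)(|b|+1)} {b,a}. -/
/-- The BV deviation bracket `{a,b} = (-1)^{|a|} Δ(ab) - (-1)^{|a|} Δ(a)·b - a·Δ(b)`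
of elements whose first argument is homogeneous of degree `i`. -/
def bvBracket {k A : Type*} [Field k] [Ring A] [Algebra k A]
    (Δ : A →ₗ[k] A) (i : ℤ) (a b : A) : A :=
  ((-1 : k) ^ i) • Δ (a * b) - ((-1 : k) ^ i) • (Δ a * b) - a * Δ b

section BVAux

variable {k A : Type*} [Field k] [Ring A] [Algebra k A] (Δ : A →ₗ[k] A)

lemma neg_one_zpow_mul_self (n : ℤ) : ((-1:k)^n) * ((-1:k)^n) = 1 := by
  rw [← zpow_add₀ (by norm_num : (-1:k) ≠ 0)]
  exact Even.neg_one_zpow ⟨n, rfl⟩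

lemma neg_one_zpow_succ (n : ℤ) : ((-1:k)^(n+1)) = -((-1:k)^n) := by
  rw [zpow_add₀ (by norm_num : (-1:k) ≠ 0), zpow_one, mul_neg_one]

lemma bv_sub (p : ℤ) (x y z : A) :
    bvBracket Δ p x (y - z) = bvBracket Δ p x y - bvBracket Δ p x z := by
  simp only [bvBracket, mul_sub, map_sub, smul_sub]; abel

lemma bv_smul (p : ℤ) (r : k) (x y : A) :
    bvBracket Δ p x (r • y) = r • bvBracket Δ p x y := by
  simp only [bvBracket, mul_smul_comm, map_smul, smul_sub]
  match_scalars <;> ring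

lemma bv_Dprod (p : ℤ) (x y : A) :
    Δ (x * y) = ((-1:k)^p) • bvBracket Δ p x y + Δ x * y + ((-1:k)^p) • (x * Δ y) := by
  simp only [bvBracket, smul_sub]
  match_scalars <;> simp [neg_one_zpow_mul_self]

lemma bv_star (hΔΔ : ∀ a : A, Δ (Δ a) = 0) (p : ℤ) (x y : A) :
    bvBracket Δ p x (Δ y) =
      ((-1:k)^p) • bvBracket Δ (p+1) (Δ x) y - ((-1:k)^p) • Δ (bvBracket Δ p x y) := by
  simp only [bvBracket, map_sub, map_smul, hΔΔ, smul_sub, zero_mul, mul_zero, smul_zero,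
    sub_zero, zero_sub]
  match_scalars <;> simp [neg_one_zpow_mul_self, neg_one_zpow_succ]

end BVAux

/-- Let `V` be a graded commutative algebra over a field of characteristic
`≠ 2` with a degree-one operator `Δ` satisfying `Δ² = 0`, and define
`{a,b} = (-1)^{|a|} Δ(ab) - (-1)^{|a|} Δ(a)·b - a·Δ(b)`.  If `{·,·}` is a graded
derivation of the product in each variable (i.e. `V` is a BV-algebra), then `{·,·}`
satisfies the graded Jacobi identity making `V[1]` a graded Lie algebra; in particular
it is graded antisymmetric: `{a,b} = -(-1)^{(|a|+1)(|b|+1)} {b,a}`. -/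
theorem bv_bracket_gerstenhaber
    (k A : Type*) [Field k] [Ring A] [Algebra k A] (h2 : (2 : k) ≠ 0)
    (𝒜 : ℤ → Submodule k A) [GradedAlgebra 𝒜]
    -- graded commutativity of the product:
    (hcomm : ∀ (i j : ℤ) (a b : A), a ∈ 𝒜 i → b ∈ 𝒜 j →
      a * b = ((-1 : k) ^ (i * j)) • (b * a))
    (Δ : A →ₗ[k] A)
    (hΔdeg : ∀ (i : ℤ), ∀ a ∈ 𝒜 i, Δ a ∈ 𝒜 (i + 1))
    (hΔΔ : ∀ a : A, Δ (Δ a) = 0)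
    -- the bracket is a graded derivation of the product in each variable:
    (hder : ∀ (i j l : ℤ) (a b c : A), a ∈ 𝒜 i → b ∈ 𝒜 j → c ∈ 𝒜 l →
      bvBracket Δ i a (b * c) =
        bvBracket Δ i a b * c + ((-1 : k) ^ ((i + 1) * j)) • (b * bvBracket Δ i a c))
    (hder' : ∀ (i j l : ℤ) (a b c : A), a ∈ 𝒜 i → b ∈ 𝒜 j → c ∈ 𝒜 l →
      bvBracket Δ (i + j) (a * b) c =
        a * bvBracket Δ j b c + ((-1 : k) ^ ((l + 1) * j)) • (bvBracket Δ i a c * b)) :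
    -- graded antisymmetry:
    (∀ (i j : ℤ) (a b : A), a ∈ 𝒜 i → b ∈ 𝒜 j →
      bvBracket Δ i a b = -(((-1 : k) ^ ((i + 1) * (j + 1))) • bvBracket Δ j b a)) ∧
    -- graded Jacobi identity (for the degrees shifted by one):
    (∀ (i j l : ℤ) (a b c : A), a ∈ 𝒜 i → b ∈ 𝒜 j → c ∈ 𝒜 l →
      bvBracket Δ i a (bvBracket Δ j b c) =
        bvBracket Δ (i + j + 1) (bvBracket Δ i a b) c +
          ((-1 : k) ^ ((i + 1) * (j + 1))) • bvBracket Δ j b (bvBracket Δ i a c)) := by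
  constructor
  · -- graded antisymmetry (uses only graded commutativity)
    intro i j a b ha hb
    have h1 : b * a = ((-1:k)^(j*i)) • (a * b) := hcomm j i b a hb ha
    have h2' : Δ b * a = ((-1:k)^((j+1)*i)) • (a * Δ b) :=
      hcomm (j+1) i (Δ b) a (hΔdeg j b hb) ha
    have h3 : b * Δ a = ((-1:k)^(j*(i+1))) • (Δ a * b) :=
      hcomm j (i+1) b (Δ a) hb (hΔdeg i a ha)
    simp only [bvBracket, h1, h2', h3, map_smul, smul_sub, smul_smul, neg_sub]
    match_scalars <;>
      rcases Int.even_or_odd i with hi | hi <;>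
      rcases Int.even_or_odd j with hj | hj <;>
      simp [Even.neg_one_zpow, Odd.neg_one_zpow, parity_simps, hi, hj]
  · -- graded Jacobi identity
    intro i j l a b c ha hb hc
    have e1 : bvBracket Δ i a (bvBracket Δ j b c) =
        ((-1:k)^j) • bvBracket Δ i a (Δ (b * c))
          - ((-1:k)^j) • bvBracket Δ i a (Δ b * c)
          - bvBracket Δ i a (b * Δ c) := by
      rw [show bvBracket Δ j b c =
            ((-1:k)^j) • Δ (b * c) - ((-1:k)^j) • (Δ b * c) - b * Δ c from rfl,
        bv_sub, bv_sub, bv_smul, bv_smul]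
    have e2 : bvBracket Δ i a (Δ (b * c)) =
        ((-1:k)^i) • bvBracket Δ (i+1) (Δ a) (b * c)
          - ((-1:k)^i) • Δ (bvBracket Δ i a (b * c)) := bv_star Δ hΔΔ i a (b * c)
    have e3 : bvBracket Δ (i+1) (Δ a) (b * c) =
        bvBracket Δ (i+1) (Δ a) b * c
          + ((-1:k)^((i+1+1)*j)) • (b * bvBracket Δ (i+1) (Δ a) c) :=
      hder (i+1) j l (Δ a) b c (hΔdeg i a ha) hb hc
    have e4 : bvBracket Δ i a (b * c) =
        bvBracket Δ i a b * c + ((-1:k)^((i+1)*j)) • (b * bvBracket Δ i a c) :=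
      hder i j l a b c ha hb hc
    have e5 : Δ (bvBracket Δ i a (b * c)) =
        Δ (bvBracket Δ i a b * c) + ((-1:k)^((i+1)*j)) • Δ (b * bvBracket Δ i a c) := by
      rw [e4, map_add, map_smul]
    have e6 : Δ (bvBracket Δ i a b * c) =
        ((-1:k)^(i+j+1)) • bvBracket Δ (i+j+1) (bvBracket Δ i a b) c
          + Δ (bvBracket Δ i a b) * c
          + ((-1:k)^(i+j+1)) • (bvBracket Δ i a b * Δ c) := bv_Dprod Δ (i+j+1) _ _
    have e7 : Δ (b * bvBracket Δ i a c) =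
        ((-1:k)^j) • bvBracket Δ j b (bvBracket Δ i a c)
          + Δ b * bvBracket Δ i a c
          + ((-1:k)^j) • (b * Δ (bvBracket Δ i a c)) := bv_Dprod Δ j _ _
    have e8 : bvBracket Δ i a (Δ b * c) =
        bvBracket Δ i a (Δ b) * c
          + ((-1:k)^((i+1)*(j+1))) • (Δ b * bvBracket Δ i a c) :=
      hder i (j+1) l a (Δ b) c ha (hΔdeg j b hb) hc
    have e9 : bvBracket Δ i a (Δ b) =
        ((-1:k)^i) • bvBracket Δ (i+1) (Δ a) b
          - ((-1:k)^i) • Δ (bvBracket Δ i a b) := bv_star Δ hΔΔ i a b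
    have e10 : bvBracket Δ i a (b * Δ c) =
        bvBracket Δ i a b * Δ c + ((-1:k)^((i+1)*j)) • (b * bvBracket Δ i a (Δ c)) :=
      hder i j (l+1) a b (Δ c) ha hb (hΔdeg l c hc)
    have e11 : bvBracket Δ i a (Δ c) =
        ((-1:k)^i) • bvBracket Δ (i+1) (Δ a) c
          - ((-1:k)^i) • Δ (bvBracket Δ i a c) := bv_star Δ hΔΔ i a c
    rw [e1, e2, e3, e5, e6, e7, e8, e9, e10, e11]
    simp only [smul_add, smul_sub, smul_smul, sub_mul, smul_mul_assoc, mul_sub,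
      mul_smul_comm, mul_add]
    match_scalars <;>
      rcases Int.even_or_odd i with hi | hi <;>
      rcases Int.even_or_odd j with hj | hj <;>
      simp [Even.neg_one_zpow, Odd.neg_one_zpow, parity_simps, hi, hj, Int.not_odd_iff_even.mpr,
        Int.not_even_iff_odd.mpr]
end
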